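/- Let p be a prime. The integral of |r|_p^{-2}·log|1 + r|_p over {r ∈ ℚ_p : |r|_p ≥ 1} with respect to the normalized Haar measure equals 0. -/

import Mathlib

open MeasureTheory Topology Filter

noncomputable instance (p : ℕ) [Fact p.Prime] : MeasurableSpace ℚ_[p] := borel _
instance (p : ℕ) [Fact p.Prime] : BorelSpace ℚ_[p] := ⟨rfl⟩

/-- The closed unit ball of `ℚ_[p]` as a positive compact set. -/
noncomputable def padicUnitBall (p : ℕ) [Fact p.Prime] :
    TopologicalSpace.PositiveCompacts ℚ_[p] where
  carrier := {x : ℚ_[p] | ‖x‖ ≤ 1}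
  isCompact' := by
    have h : {x : ℚ_[p] | ‖x‖ ≤ 1} = Metric.closedBall 0 1 := by
      ext x; simp [dist_eq_norm]
    rw [h]
    exact isCompact_closedBall 0 1
  interior_nonempty' := by
    refine ⟨0, ?_⟩
    have h : Metric.ball (0 : ℚ_[p]) 1 ⊆ {x : ℚ_[p] | ‖x‖ ≤ 1} := by
      intro x hx
      simp only [Metric.mem_ball, dist_eq_norm, sub_zero] at hx
      exact le_of_lt hx
    exact interior_maximal h Metric.isOpen_ball (Metric.mem_ball_self one_pos)

/-- The Haar measure on `ℚ_[p]`, normalized so that `ℤ_[p]` has measure 1. -/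
noncomputable def padicHaar (p : ℕ) [Fact p.Prime] : Measure ℚ_[p] :=
  Measure.addHaarMeasure (padicUnitBall p)

/-!
For `‖r‖ = p ^ k > 1` we have `‖1 + r‖ = ‖r‖`, so the integrand equals `k p ^ (-2k) log p` on a
sphere of measure `p ^ k - p ^ (k - 1)`. On the unit sphere the integrand is `log ‖1 + r‖`: it
equals `-k log p` on the sphere `‖1 + r‖ = p ^ (-k)`, of measure `p ^ (-k) - p ^ (-k - 1)`, and
vanishes elsewhere. For each `k ≥ 1` the two contributions cancel.

The sphere measures come from `μ (closedBall x (p ^ k)) = p ^ k`: the unit ball is the disjoint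
union of the `p` balls `closedBall i p⁻¹`, so multiplication by `p` scales the Haar measure by
`p⁻¹`.
-/

namespace MeasureTheory

variable {α ι E : Type*} [MeasurableSpace α] [Countable ι] [NormedAddCommGroup E] [NormedSpace ℝ E]
  [CompleteSpace E]
  {μ : Measure α} {f : α → E} {s : ι → Set α} {c : ι → E}

theorem integrableOn_iUnion_and_hasSum_of_eqOn_const (hs : ∀ i, MeasurableSet (s i))
    (hd : Pairwise (Function.onFun Disjoint s)) (hμ : ∀ i, μ (s i) ≠ ⊤)
    (hf : ∀ i, Set.EqOn f (fun _ ↦ c i) (s i)) (hsum : Summable fun i ↦ μ.real (s i) * ‖c i‖) :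
    IntegrableOn f (⋃ i, s i) μ ∧
      HasSum (fun i ↦ μ.real (s i) • c i) (∫ x in ⋃ i, s i, f x ∂μ) := by
  have hint : IntegrableOn f (⋃ i, s i) μ := by
    refine integrableOn_iUnion_of_summable_integral_norm
      (fun i ↦ (integrableOn_const (hμ i)).congr_fun (hf i).symm (hs i)) (hsum.congr fun i ↦ ?_)
    rw [setIntegral_congr_fun (hs i) fun x hx ↦ congrArg norm (hf i hx), setIntegral_const,
      smul_eq_mul]
  refine ⟨hint, (hasSum_integral_iUnion hs hd hint).congr_fun fun i ↦ ?_⟩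
  rw [setIntegral_congr_fun (hs i) (hf i), setIntegral_const]

end MeasureTheory

theorem Real.summable_natCast_mul_zpow_neg {q : ℝ} (hq : 1 < q) :
    Summable fun k : ℕ ↦ (k : ℝ) * q ^ (-(k : ℤ)) := by
  have hq' : ‖q⁻¹‖ < 1 := by
    rw [norm_inv, Real.norm_of_nonneg (by linarith)]; exact inv_lt_one_of_one_lt₀ hq
  simpa [zpow_neg, inv_pow] using summable_pow_mul_geometric_of_norm_lt_one 1 hq'

theorem Real.zpow_sub_zpow_sub_one_mul_zpow_neg_two_mul {q : ℝ} (hq : q ≠ 0) (k : ℤ) :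
    (q ^ k - q ^ (k - 1)) * q ^ (-2 * k) = q ^ (-k) - q ^ (-k - 1) := by
  rw [sub_mul, ← zpow_add₀ hq, ← zpow_add₀ hq]
  congr 2 <;> ring

section UltrametricRing

variable {R : Type*} [NormedRing R] [NormOneClass R] [IsUltrametricDist R] {r : R}

theorem norm_one_add_of_one_lt_norm (h : 1 < ‖r‖) : ‖1 + r‖ = ‖r‖ := by
  rw [IsUltrametricDist.norm_add_eq_max_of_norm_ne_norm (by rw [norm_one]; exact h.ne),
    norm_one, max_eq_right h.le]

theorem norm_eq_one_of_norm_one_add_lt_one (h : ‖1 + r‖ < 1) : ‖r‖ = 1 := by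
  have := IsUltrametricDist.norm_add_eq_max_of_norm_ne_norm (x := 1 + r) (y := -1)
    (by rw [norm_neg, norm_one]; exact h.ne)
  rwa [add_neg_cancel_comm, norm_neg, norm_one, max_eq_right h.le] at this

end UltrametricRing

namespace Padic

open Metric
open scoped NNReal ENNReal Pointwise

variable {p : ℕ} [hp : Fact p.Prime]

instance : (padicHaar p).IsAddHaarMeasure := by unfold padicHaar; infer_instance

instance : (padicHaar p).Regular := by unfold padicHaar; infer_instance

theorem padicHaar_closedBall_zero_one : padicHaar p (closedBall 0 1) = 1 := by
  have : closedBall (0 : ℚ_[p]) 1 = padicUnitBall p := by ext; simp [padicUnitBall]; rfl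
  rw [this, padicHaar, Measure.addHaarMeasure_self]

theorem norm_natCast_sub_natCast_eq_one {i j : ℕ} (hi : i < p) (hj : j < p) (hij : i ≠ j) :
    ‖(i : ℚ_[p]) - j‖ = 1 := by
  have hdvd : ¬ (p : ℤ) ∣ (i : ℤ) - j := fun h ↦
    hij (by have := Int.eq_zero_of_abs_lt_dvd h (by rw [abs_lt]; omega); omega)
  have := (norm_intCast_lt_one_iff (p := p)).not.2 hdvd
  push_cast at this
  exact le_antisymm (by exact_mod_cast norm_int_le_one (p := p) ((i : ℤ) - j)) (not_lt.1 this)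

theorem closedBall_zero_one_eq_biUnion :
    closedBall (0 : ℚ_[p]) 1 = ⋃ i ∈ Finset.range p, closedBall (i : ℚ_[p]) (p : ℝ)⁻¹ := by
  ext x
  simp only [Set.mem_iUnion, Finset.mem_range, exists_prop]
  constructor
  · intro hx
    set y : ℤ_[p] := ⟨x, by simpa using hx⟩
    refine ⟨y.zmodRepr, y.zmodRepr_lt_p, ?_⟩
    have hlt : ‖x - y.zmodRepr‖ < 1 := PadicInt.mem_nonunits.1 y.sub_zmodRepr_mem
    simpa [dist_eq_norm] using
      (norm_lt_pow_iff_norm_le_pow_sub_one (x - (y.zmodRepr : ℚ_[p])) 0).1 (by simpa using hlt)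
  · rintro ⟨i, -, hi⟩
    have hi1 : (i : ℚ_[p]) ∈ closedBall 0 1 := by simpa using norm_int_le_one (p := p) i
    rw [IsUltrametricDist.closedBall_eq_of_mem hi1]
    exact closedBall_subset_closedBall
      (inv_le_one_of_one_le₀ (by exact_mod_cast hp.out.one_le)) hi

theorem pairwiseDisjoint_closedBall_natCast :
    (Finset.range p : Set ℕ).PairwiseDisjoint fun i ↦ closedBall (i : ℚ_[p]) (p : ℝ)⁻¹ := by
  intro i hi j hj hij
  refine (IsUltrametricDist.closedBall_eq_or_disjoint _ _ _).resolve_left fun h ↦ ?_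
  have hj' : (j : ℚ_[p]) ∈ closedBall (i : ℚ_[p]) (p : ℝ)⁻¹ :=
    h ▸ mem_closedBall_self (by positivity)
  rw [mem_closedBall, dist_comm, dist_eq_norm,
    norm_natCast_sub_natCast_eq_one (by simpa using hi) (by simpa using hj) hij] at hj'
  exact hj'.not_gt (inv_lt_one_of_one_lt₀ (by exact_mod_cast hp.out.one_lt))

theorem padicHaar_closedBall_zero_inv : padicHaar p (closedBall 0 (p : ℝ)⁻¹) = (p : ℝ≥0∞)⁻¹ := by
  refine ENNReal.eq_inv_of_mul_eq_one_left ?_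
  rw [mul_comm, ← padicHaar_closedBall_zero_one (p := p), closedBall_zero_one_eq_biUnion,
    measure_biUnion_finset pairwiseDisjoint_closedBall_natCast fun _ _ ↦ measurableSet_closedBall]
  simp [Measure.addHaar_closedBall_center]

theorem distribHaarChar_mk0_natCast :
    distribHaarChar ℚ_[p] (Units.mk0 (p : ℚ_[p]) (by exact_mod_cast hp.out.ne_zero)) =
      (p : ℝ≥0)⁻¹ := by
  refine distribHaarChar_eq_of_measure_smul_eq_mul (μ := padicHaar p) (s := closedBall 0 1)
    (by simp [padicHaar_closedBall_zero_one]) (by simp [padicHaar_closedBall_zero_one]) ?_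
  rw [Units.smul_def, Units.val_mk0, smul_closedBall' (by exact_mod_cast hp.out.ne_zero), norm_p,
    smul_zero, mul_one, padicHaar_closedBall_zero_inv, padicHaar_closedBall_zero_one, mul_one,
    ENNReal.coe_inv (by exact_mod_cast hp.out.ne_zero), ENNReal.coe_natCast]

theorem padicHaar_closedBall (x : ℚ_[p]) (k : ℤ) :
    padicHaar p (closedBall x ((p : ℝ) ^ k)) = ((p : ℝ≥0) ^ k : ℝ≥0) := by
  set u : ℚ_[p]ˣ := Units.mk0 (p : ℚ_[p]) (by exact_mod_cast hp.out.ne_zero)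
  have hball : closedBall (0 : ℚ_[p]) ((p : ℝ) ^ k) = u ^ (-k) • closedBall 0 1 := by
    rw [Units.smul_def, Units.val_zpow_eq_zpow_val, Units.val_mk0,
      smul_closedBall' (zpow_ne_zero _ (by exact_mod_cast hp.out.ne_zero)), norm_p_zpow, neg_neg,
      smul_zero, mul_one]
  rw [Measure.addHaar_closedBall_center, hball, ← distribHaarChar_mul,
    padicHaar_closedBall_zero_one, mul_one, map_zpow, distribHaarChar_mk0_natCast, inv_zpow',
    neg_neg]

theorem padicHaar_real_closedBall (x : ℚ_[p]) (k : ℤ) :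
    (padicHaar p).real (closedBall x ((p : ℝ) ^ k)) = (p : ℝ) ^ k := by
  simp [measureReal_def, padicHaar_closedBall]

theorem sphere_zpow_eq_closedBall_diff (x : ℚ_[p]) (k : ℤ) :
    sphere x ((p : ℝ) ^ k) = closedBall x ((p : ℝ) ^ k) \ closedBall x ((p : ℝ) ^ (k - 1)) := by
  ext y
  rw [Set.mem_sdiff, mem_sphere, mem_closedBall, mem_closedBall, dist_eq_norm,
    norm_le_pow_iff_norm_lt_pow_add_one _ (k - 1), sub_add_cancel, not_lt, le_antisymm_iff]

theorem padicHaar_real_sphere (x : ℚ_[p]) (k : ℤ) :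
    (padicHaar p).real (sphere x ((p : ℝ) ^ k)) = (p : ℝ) ^ k - (p : ℝ) ^ (k - 1) := by
  have hle : (p : ℝ) ^ (k - 1) ≤ (p : ℝ) ^ k :=
    zpow_le_zpow_right₀ (by exact_mod_cast hp.out.one_le) (by omega)
  rw [sphere_zpow_eq_closedBall_diff, measureReal_sdiff (closedBall_subset_closedBall hle)
    measurableSet_closedBall (measure_closedBall_lt_top.ne), padicHaar_real_closedBall,
    padicHaar_real_closedBall]

theorem one_lt_norm_of_mem_sphere_zero {k : ℤ} (hk : 0 < k) {r : ℚ_[p]}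
    (hr : r ∈ sphere 0 ((p : ℝ) ^ k)) : 1 < ‖r‖ :=
  (mem_sphere_zero_iff_norm.1 hr) ▸ one_lt_zpow₀ (by exact_mod_cast hp.out.one_lt) hk

theorem norm_one_add_of_mem_sphere_neg_one {k : ℤ} {r : ℚ_[p]}
    (hr : r ∈ sphere (-1) ((p : ℝ) ^ k)) : ‖1 + r‖ = (p : ℝ) ^ k := by
  rwa [mem_sphere, dist_eq_norm, sub_neg_eq_add, add_comm] at hr

theorem norm_eq_one_of_mem_sphere_neg_one {k : ℤ} (hk : 0 < k) {r : ℚ_[p]}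
    (hr : r ∈ sphere (-1) ((p : ℝ) ^ (-k))) : ‖r‖ = 1 :=
  norm_eq_one_of_norm_one_add_lt_one <| (norm_one_add_of_mem_sphere_neg_one hr) ▸
    zpow_lt_one_of_neg₀ (by exact_mod_cast hp.out.one_lt) (by omega)

theorem rpow_neg_two_mul_log_norm_one_add_of_mem_sphere_zero {k : ℤ} (hk : 0 < k) {r : ℚ_[p]}
    (hr : r ∈ sphere 0 ((p : ℝ) ^ k)) :
    ‖r‖ ^ (-2 : ℝ) * Real.log ‖1 + r‖ = (p : ℝ) ^ (-2 * k) * (k * Real.log p) := by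
  rw [norm_one_add_of_one_lt_norm (one_lt_norm_of_mem_sphere_zero hk hr),
    mem_sphere_zero_iff_norm.1 hr, Real.log_zpow, show (-2 : ℝ) = ((-2 : ℤ) : ℝ) by norm_num,
    Real.rpow_intCast, ← zpow_mul, mul_comm k]

theorem rpow_neg_two_mul_log_norm_one_add_of_mem_sphere_neg_one {k : ℤ} (hk : 0 < k)
    {r : ℚ_[p]} (hr : r ∈ sphere (-1) ((p : ℝ) ^ (-k))) :
    ‖r‖ ^ (-2 : ℝ) * Real.log ‖1 + r‖ = -(k * Real.log p) := by
  rw [norm_eq_one_of_mem_sphere_neg_one hk hr, Real.one_rpow, one_mul,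
    norm_one_add_of_mem_sphere_neg_one hr, Real.log_zpow, Int.cast_neg, neg_mul]

theorem one_lt_norm_of_mem_iUnion_sphere_zero {r : ℚ_[p]}
    (hr : r ∈ ⋃ n : ℕ, sphere 0 ((p : ℝ) ^ ((n : ℤ) + 1))) : 1 < ‖r‖ := by
  obtain ⟨n, hn⟩ := Set.mem_iUnion.1 hr
  exact one_lt_norm_of_mem_sphere_zero (by omega) hn

theorem norm_eq_one_of_mem_iUnion_sphere_neg_one {r : ℚ_[p]}
    (hr : r ∈ ⋃ n : ℕ, sphere (-1) ((p : ℝ) ^ (-((n : ℤ) + 1)))) : ‖r‖ = 1 := by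
  obtain ⟨n, hn⟩ := Set.mem_iUnion.1 hr
  exact norm_eq_one_of_mem_sphere_neg_one (by omega) hn

theorem log_norm_one_add_eq_zero {r : ℚ_[p]} (hr : 1 ≤ ‖r‖)
    (hA : ∀ n : ℕ, r ∉ sphere 0 ((p : ℝ) ^ ((n : ℤ) + 1)))
    (hC : ∀ n : ℕ, r ∉ sphere (-1) ((p : ℝ) ^ (-((n : ℤ) + 1)))) :
    Real.log ‖1 + r‖ = 0 := by
  have hp1 : (1 : ℝ) < p := by exact_mod_cast hp.out.one_lt
  have hr1 : ‖r‖ = 1 := by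
    have hk := norm_eq_zpow_neg_valuation (norm_pos_iff.1 (one_pos.trans_le hr))
    have hk0 : -r.valuation ≤ 0 := not_lt.1 fun h ↦ hA (-r.valuation - 1).toNat (by
      rw [mem_sphere_zero_iff_norm, hk]
      congr 1
      omega)
    exact le_antisymm (hk ▸ zpow_le_one_of_nonpos₀ hp1.le hk0) hr
  rcases eq_or_ne (1 + r) 0 with h0 | h0
  · rw [h0, norm_zero, Real.log_zero]
  have hk := norm_eq_zpow_neg_valuation h0
  have hk0 : 0 ≤ -(1 + r).valuation := not_lt.1 fun h ↦ hC ((1 + r).valuation - 1).toNat (by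
    rw [mem_sphere, dist_eq_norm, sub_neg_eq_add, add_comm, hk]
    congr 1
    omega)
  have hle : ‖1 + r‖ ≤ 1 := (IsUltrametricDist.norm_add_le_max _ _).trans (by simp [hr1])
  rw [le_antisymm hle (hk ▸ one_le_zpow₀ hp1.le hk0), Real.log_one]

theorem summable_zpow_neg_sub_mul_log :
    Summable fun n : ℕ ↦ ((p : ℝ) ^ (-((n : ℤ) + 1)) - (p : ℝ) ^ (-((n : ℤ) + 1) - 1)) *
      (((n : ℤ) + 1 : ℤ) * Real.log p) := by
  have hp1 : (1 : ℝ) < p := by exact_mod_cast hp.out.one_lt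
  refine (((summable_nat_add_iff 1).2 (Real.summable_natCast_mul_zpow_neg hp1)).mul_left
    ((1 - (p : ℝ)⁻¹) * Real.log p)).congr fun n ↦ ?_
  rw [zpow_sub_one₀ (by positivity)]
  push_cast
  ring

theorem integrableOn_iUnion_sphere_and_hasSum {ι : Type*} [Countable ι] {x : ℚ_[p]} {e : ι → ℤ}
    (he : Function.Injective e) {f : ℚ_[p] → ℝ} {c : ι → ℝ}
    (hf : ∀ i, Set.EqOn f (fun _ ↦ c i) (sphere x ((p : ℝ) ^ e i)))
    (hsum : Summable fun i ↦ ((p : ℝ) ^ e i - (p : ℝ) ^ (e i - 1)) * |c i|) :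
    IntegrableOn f (⋃ i, sphere x ((p : ℝ) ^ e i)) (padicHaar p) ∧
      HasSum (fun i ↦ ((p : ℝ) ^ e i - (p : ℝ) ^ (e i - 1)) * c i)
        (∫ r in ⋃ i, sphere x ((p : ℝ) ^ e i), f r ∂padicHaar p) := by
  have hinj : Function.Injective fun k : ℤ ↦ (p : ℝ) ^ k :=
    zpow_right_injective₀ (by exact_mod_cast hp.out.pos) (by exact_mod_cast hp.out.one_lt.ne')
  simp_rw [← padicHaar_real_sphere x, ← Real.norm_eq_abs] at hsum ⊢
  exact integrableOn_iUnion_and_hasSum_of_eqOn_const (fun _ ↦ isClosed_sphere.measurableSet)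
    (fun i j hij ↦ Set.disjoint_left.2 fun r hi hj ↦ hij (he (hinj (hi.symm.trans hj))))
    (fun _ ↦ (isCompact_sphere _ _).measure_lt_top.ne) hf hsum

end Padic

open Padic Metric

theorem stmt14 (p : ℕ) [Fact p.Prime] :
    ∫ r in {r : ℚ_[p] | 1 ≤ ‖r‖}, ‖r‖ ^ (-2 : ℝ) * Real.log ‖1 + r‖ ∂(padicHaar p) = 0 := by
  have hp0 : (p : ℝ) ≠ 0 := by exact_mod_cast (Fact.out : p.Prime).ne_zero
  obtain ⟨hintA, hsumA⟩ := integrableOn_iUnion_sphere_and_hasSum (x := (0 : ℚ_[p]))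
    (e := fun n : ℕ ↦ (n : ℤ) + 1) (fun _ _ h ↦ by simpa using h)
    (fun n _ hr ↦ rpow_neg_two_mul_log_norm_one_add_of_mem_sphere_zero (by omega) hr)
    ((summable_zpow_neg_sub_mul_log (p := p)).congr fun n ↦ by
      rw [abs_of_nonneg (by positivity), ← mul_assoc (_ - _) ((p : ℝ) ^ _),
        Real.zpow_sub_zpow_sub_one_mul_zpow_neg_two_mul hp0])
  obtain ⟨hintC, hsumC⟩ := integrableOn_iUnion_sphere_and_hasSum (x := (-1 : ℚ_[p]))
    (e := fun n : ℕ ↦ -((n : ℤ) + 1)) (fun _ _ h ↦ by simpa using h)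
    (fun n _ hr ↦ rpow_neg_two_mul_log_norm_one_add_of_mem_sphere_neg_one (by omega) hr)
    ((summable_zpow_neg_sub_mul_log (p := p)).congr fun n ↦ by
      rw [abs_neg, abs_of_nonneg (by positivity)])
  rw [setIntegral_eq_of_subset_of_forall_sdiff_eq_zero
      (measurableSet_le measurable_const measurable_norm)
      (Set.union_subset (fun _ hr ↦ (one_lt_norm_of_mem_iUnion_sphere_zero hr).le)
        (fun _ hr ↦ (norm_eq_one_of_mem_iUnion_sphere_neg_one hr).ge)) ?_,
    setIntegral_union (Set.disjoint_left.2 fun _ hrA hrC ↦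
      (one_lt_norm_of_mem_iUnion_sphere_zero hrA).ne'
        (norm_eq_one_of_mem_iUnion_sphere_neg_one hrC))
      (.iUnion fun _ ↦ isClosed_sphere.measurableSet) hintA hintC]
  · refine (hsumA.add hsumC).unique (hasSum_zero.congr_fun fun n ↦ ?_)
    rw [← mul_assoc, Real.zpow_sub_zpow_sub_one_mul_zpow_neg_two_mul hp0]
    ring
  · rintro r ⟨hr, hAC⟩
    simp only [Set.mem_union, Set.mem_iUnion, not_or, not_exists] at hAC
    rw [log_norm_one_add_eq_zero hr hAC.1 hAC.2, mul_zero]
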